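/- arXiv:2312.06180 — 3 statements merged into one kernel-verified Lean document; each statement's English description precedes it below -/
import Mathlib

section
/- Coppel's inequality: if x : [t₀,∞) → ℝⁿ satisfies ẋ(t) = A(t) x(t) with A continuous, and there exists β > 0 with μ_p(A(t)) ≤ −β for all t ≥ t₀, then ‖x(t)‖_p ≤ e^{−β(t−t₀)} ‖x(t₀)‖_p for all t ≥ t₀. -/
/-! For `p ≥ 1` the `p`-norm is the norm of `PiLp p` and `opNorm p` is the operator norm there.
Since `x (t + h) = (1 + h • A t) *ᵥ x t + o(h)`, the upper right Dini derivative of `‖x t‖_p` is at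
most `μ t * ‖x t‖_p ≤ -β * ‖x t‖_p`, and Grönwall's inequality for Dini derivatives gives the
exponential bound. -/

open Filter Topology Matrix

noncomputable def pnorm {ι : Type*} [Fintype ι] (p : ℝ) (v : ι → ℝ) : ℝ :=
  (∑ i, |v i| ^ p) ^ (1 / p)

noncomputable def opNorm {ι κ : Type*} [Fintype ι] [Fintype κ]
    (p : ℝ) (M : Matrix ι κ ℝ) : ℝ :=
  ⨆ x : {x : κ → ℝ // pnorm p x ≤ 1}, pnorm p (M.mulVec x)

open Set WithLp

section Slope

variable {E : Type*} [NormedAddCommGroup E] [NormedSpace ℝ E]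

lemma tendsto_sub_const_nhdsGT (s : ℝ) : Tendsto (· - s) (𝓝[>] s) (𝓝[>] 0) :=
  tendsto_nhdsWithin_of_tendsto_nhds_of_eventually_within _
    (by simpa using (tendsto_id.sub_const s).mono_left (nhdsWithin_le_nhds (a := s)))
    (eventually_nhdsWithin_of_forall fun _ hz => mem_Ioi.2 (sub_pos.2 hz))

lemma eventually_slope_norm_lt {X : ℝ → E} {v : E} {s r r' : ℝ}
    (hX : HasDerivWithinAt X v (Ici s) s)
    (hv : ∀ᶠ h in 𝓝[>] 0, ‖X s + h • v‖ ≤ ‖X s‖ + h * r) (hr : r < r') :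
    ∀ᶠ z in 𝓝[>] s, (z - s)⁻¹ * (‖X z‖ - ‖X s‖) < r' := by
  have herr : Tendsto (fun z => ‖X z - X s - (z - s) • v‖ / (z - s)) (𝓝[>] s) (𝓝 0) :=
    ((hasDerivWithinAt_iff_isLittleO.mp hX).norm_left.tendsto_div_nhds_zero).mono_left
      (nhdsWithin_mono _ Ioi_subset_Ici_self)
  filter_upwards [self_mem_nhdsWithin, (tendsto_sub_const_nhdsGT s).eventually hv,
    herr.eventually_lt_const (sub_pos.2 hr)] with z (hz : s < z) hvz herrz
  have hzs : 0 < z - s := sub_pos.2 hz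
  rw [div_lt_iff₀ hzs] at herrz
  have htriangle : ‖X z‖ ≤ ‖X s + (z - s) • v‖ + ‖X z - X s - (z - s) • v‖ := by
    simpa [sub_sub] using norm_le_insert' (X z) (X s + (z - s) • v)
  rw [inv_mul_lt_iff₀ hzs]
  linarith

theorem norm_le_exp_mul_norm_of_norm_add_smul_le {X X' : ℝ → E} {K a b : ℝ} (hab : a ≤ b)
    (hc : ContinuousOn X (Icc a b)) (hX : ∀ s ∈ Ico a b, HasDerivWithinAt X (X' s) (Ici s) s)
    (hK : ∀ s ∈ Ico a b, ∀ r, K * ‖X s‖ < r →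
      ∀ᶠ h in 𝓝[>] 0, ‖X s + h • X' s‖ ≤ ‖X s‖ + h * r) :
    ‖X b‖ ≤ Real.exp (K * (b - a)) * ‖X a‖ := by
  have hslope : ∀ s ∈ Ico a b, ∀ r', K * ‖X s‖ < r' →
      ∃ᶠ z in 𝓝[>] s, (z - s)⁻¹ * (‖X z‖ - ‖X s‖) < r' := by
    intro s hs r' hr'
    obtain ⟨r, hKr, hrr'⟩ := exists_between hr'
    exact (eventually_slope_norm_lt (hX s hs) (hK s hs r hKr) hrr').frequently
  have := le_gronwallBound_of_liminf_deriv_right_le hc.norm hslope le_rfl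
    (fun s _ => (add_zero _).ge) b (right_mem_Icc.2 hab)
  rwa [gronwallBound_ε0, mul_comm] at this

end Slope

section PNorm

variable {ι κ : Type*} [Fintype ι] [Fintype κ] {p : ℝ}

lemma pnorm_eq_norm_toLp (hp : 0 < p) (v : ι → ℝ) :
    pnorm p v = ‖toLp (ENNReal.ofReal p) v‖ := by
  rw [PiLp.norm_eq_sum (by rwa [ENNReal.toReal_ofReal hp.le])]
  simp [pnorm, ENNReal.toReal_ofReal hp.le, Real.norm_eq_abs]

lemma opNorm_eq_norm_toLpLin [Fact (1 ≤ ENNReal.ofReal p)] [DecidableEq κ] (M : Matrix ι κ ℝ) :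
    opNorm p M = ‖LinearMap.toContinuousLinearMap
      (toLpLin (ENNReal.ofReal p) (ENNReal.ofReal p) M)‖ := by
  have hp : 0 < p := zero_lt_one.trans_le (ENNReal.one_le_ofReal.1 Fact.out)
  rw [← ContinuousLinearMap.sSup_unitClosedBall_eq_norm, sSup_image']
  refine Equiv.iSup_congr ((WithLp.equiv _ _).symm.subtypeEquiv fun v => ?_) fun v => ?_
  · simp [pnorm_eq_norm_toLp hp]
  · simp [pnorm_eq_norm_toLp hp, toLpLin_apply]

lemma pnorm_mulVec_le_opNorm_mul (hp : 1 ≤ p) (M : Matrix ι κ ℝ) (v : κ → ℝ) :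
    pnorm p (M *ᵥ v) ≤ opNorm p M * pnorm p v := by
  classical
  have : Fact (1 ≤ ENNReal.ofReal p) := ⟨ENNReal.one_le_ofReal.2 hp⟩
  rw [opNorm_eq_norm_toLpLin, pnorm_eq_norm_toLp (by linarith), pnorm_eq_norm_toLp (by linarith)]
  exact (LinearMap.toContinuousLinearMap
    (toLpLin (ENNReal.ofReal p) (ENNReal.ofReal p) M)).le_opNorm (toLp _ v)

lemma eventually_pnorm_add_smul_mulVec_le [DecidableEq ι] (hp : 1 ≤ p) {M : Matrix ι ι ℝ} {m r : ℝ}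
    (hM : Tendsto (fun h : ℝ => (opNorm p (1 + h • M) - 1) / h) (𝓝[>] 0) (𝓝 m))
    {v : ι → ℝ} (hr : m * pnorm p v < r) :
    ∀ᶠ h in 𝓝[>] 0, pnorm p (v + h • M *ᵥ v) ≤ pnorm p v + h * r := by
  filter_upwards [self_mem_nhdsWithin, (hM.mul_const _).eventually_lt_const hr]
    with h (hh : 0 < h) hlt
  calc pnorm p (v + h • M *ᵥ v) = pnorm p ((1 + h • M) *ᵥ v) := by
        rw [add_mulVec, one_mulVec, smul_mulVec]
    _ ≤ opNorm p (1 + h • M) * pnorm p v := pnorm_mulVec_le_opNorm_mul hp _ _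
    _ = pnorm p v + h * ((opNorm p (1 + h • M) - 1) / h * pnorm p v) := by
        field_simp
        ring
    _ ≤ pnorm p v + h * r := by gcongr

end PNorm

theorem coppel_general (p : ℝ) (hp : 1 ≤ p) (n : ℕ)
    (A : ℝ → Matrix (Fin n) (Fin n) ℝ)
    (t₀ β : ℝ) (μ : ℝ → ℝ)
    (hμ : ∀ t, t₀ ≤ t →
      Tendsto (fun h : ℝ =>
          (opNorm p ((1 : Matrix (Fin n) (Fin n) ℝ) + h • A t) - 1) / h)
        (𝓝[>] 0) (𝓝 (μ t)))
    (hμβ : ∀ t, t₀ ≤ t → μ t ≤ -β)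
    (x : ℝ → Fin n → ℝ)
    (hx : ∀ t, t₀ ≤ t → HasDerivAt x ((A t).mulVec (x t)) t) :
    ∀ t, t₀ ≤ t → pnorm p (x t) ≤ Real.exp (-β * (t - t₀)) * pnorm p (x t₀) := by
  intro T hT
  have : Fact (1 ≤ ENNReal.ofReal p) := ⟨ENNReal.one_le_ofReal.2 hp⟩
  have hnorm := pnorm_eq_norm_toLp (ι := Fin n) (by linarith : 0 < p)
  set q := ENNReal.ofReal p
  have hX : ∀ s, t₀ ≤ s → HasDerivAt (fun s => toLp q (x s)) (toLp q (A s *ᵥ x s)) s :=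
    fun s hs =>
      (PiLp.continuousLinearEquiv q ℝ fun _ => ℝ).symm.hasFDerivAt.comp_hasDerivAt s (hx s hs)
  rw [hnorm, hnorm]
  refine norm_le_exp_mul_norm_of_norm_add_smul_le hT
    (fun s hs => (hX s hs.1).continuousAt.continuousWithinAt)
    (fun s hs => (hX s hs.1).hasDerivWithinAt) fun s hs r hr => ?_
  have hμr : μ s * pnorm p (x s) < r := by
    rw [hnorm]
    exact (mul_le_mul_of_nonneg_right (hμβ s hs.1) (norm_nonneg _)).trans_lt hr
  simpa only [hnorm, toLp_add, toLp_smul] using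
    eventually_pnorm_add_smul_mulVec_le hp (hμ s hs.1) hμr

/-- Coppel's inequality: if `ẋ = A(t)x` with `A` continuous and the matrix
measure `μ_p(A(t)) ≤ −β < 0` for all `t ≥ t₀`, then
`‖x(t)‖_p ≤ e^{−β(t−t₀)} ‖x(t₀)‖_p` for all `t ≥ t₀`. -/
theorem coppel (p : ℝ) (hp : 1 ≤ p) (n : ℕ)
    (A : ℝ → Matrix (Fin n) (Fin n) ℝ) (hA : Continuous A)
    (t₀ β : ℝ) (hβ : 0 < β) (μ : ℝ → ℝ)
    (hμ : ∀ t, t₀ ≤ t →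
      Tendsto (fun h : ℝ =>
          (opNorm p ((1 : Matrix (Fin n) (Fin n) ℝ) + h • A t) - 1) / h)
        (𝓝[>] 0) (𝓝 (μ t)))
    (hμβ : ∀ t, t₀ ≤ t → μ t ≤ -β)
    (x : ℝ → Fin n → ℝ)
    (hx : ∀ t, t₀ ≤ t → HasDerivAt x ((A t).mulVec (x t)) t) :
    ∀ t, t₀ ≤ t → pnorm p (x t) ≤ Real.exp (-β * (t - t₀)) * pnorm p (x t₀) :=
  coppel_general p hp n A t₀ β μ hμ hμβ x hx
end

section
/- The function t ↦ (w(t), z(t)) = (w₀ e^{−2t}, −w₀ e^{t}) is, for each w₀ ∈ ℝ, the unique solution of the DAE ẇ = −w + e^{−3t} z, 0 = e^{3t} w + z with w(0) = w₀, and consequently this DAE is not contracting: there is no c, α > 0 with ‖(w₁(t),z₁(t)) − (w₂(t),z₂(t))‖ ≤ c e^{−αt} ‖(w₁(0),z₁(0)) − (w₂(0),z₂(0))‖ for all pairs of solutions. -/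
open Filter Topology

/-- A (C¹) solution of the DAE `ẇ = −w + e^{−3t} z`, `0 = e^{3t} w + z`. -/
def IsDAESol (w z : ℝ → ℝ) : Prop :=
  (∀ t, HasDerivAt w (-(w t) + Real.exp (-3 * t) * z t) t) ∧
  (∀ t, 0 = Real.exp (3 * t) * w t + z t)

/-!
Eliminating `z = -e^{3t} w` turns the differential equation into `ẇ = -2w`, so every solution is
`(w₀ e^{-2t}, -w₀ e^{t})`. The algebraic component of the difference of two solutions therefore
grows like `e^t`, which no bound `c e^{-αt}` can dominate.
-/

open Real

theorem eq_mul_exp_of_hasDerivAt_const_mul {f : ℝ → ℝ} {k : ℝ}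
    (hf : ∀ t, HasDerivAt f (k * f t) t) (t : ℝ) : f t = f 0 * exp (k * t) := by
  have hderiv : ∀ s, HasDerivAt (fun s => f s * exp (-k * s)) 0 s := fun s => by
    refine ((hf s).mul (hasDerivAt_const_mul (-k)).exp).congr_deriv ?_
    ring
  have hconst := is_const_of_deriv_eq_zero (fun s => (hderiv s).differentiableAt)
    (fun s => (hderiv s).deriv) t 0
  simp only [mul_zero, exp_zero, mul_one] at hconst
  rw [← hconst, mul_assoc, ← exp_add, neg_mul, neg_add_cancel, exp_zero, mul_one]

namespace IsDAESol

variable {w z : ℝ → ℝ}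

theorem eq_neg_exp_mul (h : IsDAESol w z) (t : ℝ) : z t = -(exp (3 * t) * w t) := by
  linarith [h.2 t]

theorem hasDerivAt_neg_two_mul (h : IsDAESol w z) (t : ℝ) : HasDerivAt w (-2 * w t) t := by
  refine (h.1 t).congr_deriv ?_
  have hexp : exp (-3 * t) * exp (3 * t) = 1 := by rw [← exp_add]; ring_nf; exact exp_zero
  rw [h.eq_neg_exp_mul]
  linear_combination -w t * hexp

theorem eq_explicit (h : IsDAESol w z) (t : ℝ) :
    w t = w 0 * exp (-2 * t) ∧ z t = -(w 0 * exp t) := by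
  have hw := eq_mul_exp_of_hasDerivAt_const_mul h.hasDerivAt_neg_two_mul t
  refine ⟨hw, ?_⟩
  rw [h.eq_neg_exp_mul, hw, mul_left_comm, ← exp_add]
  ring_nf

end IsDAESol

theorem isDAESol_explicit (w₀ : ℝ) :
    IsDAESol (fun t => w₀ * exp (-2 * t)) (fun t => -(w₀ * exp t)) := by
  refine ⟨fun t => ?_, fun t => ?_⟩
  · refine (((hasDerivAt_const_mul (-2)).exp).const_mul w₀).congr_deriv ?_
    have hexp : exp (-3 * t) * exp t = exp (-2 * t) := by rw [← exp_add]; ring_nf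
    linear_combination w₀ * hexp
  · rw [mul_left_comm, ← exp_add]
    ring_nf

/-- The unique solution of the DAE with `w(0) = w₀` is
`(w(t), z(t)) = (w₀ e^{−2t}, −w₀ e^{t})`, and consequently the DAE is not
contracting. -/
theorem dae_example_not_contracting :
    (∀ (w z : ℝ → ℝ) (w₀ : ℝ), IsDAESol w z → w 0 = w₀ →
      ∀ t, w t = w₀ * Real.exp (-2 * t) ∧ z t = -(w₀ * Real.exp t)) ∧
    ¬ ∃ c α : ℝ, 0 < c ∧ 0 < α ∧
      ∀ w₁ z₁ w₂ z₂ : ℝ → ℝ, IsDAESol w₁ z₁ → IsDAESol w₂ z₂ →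
        ∀ t, 0 ≤ t →
          max |w₁ t - w₂ t| |z₁ t - z₂ t| ≤
            c * Real.exp (-α * t) * max |w₁ 0 - w₂ 0| |z₁ 0 - z₂ 0| := by
  refine ⟨fun w z w₀ h h0 t => h0 ▸ h.eq_explicit t, ?_⟩
  rintro ⟨c, α, hc, hα, H⟩
  have hbound := H _ _ _ _ (isDAESol_explicit 1) (isDAESol_explicit 0) c hc.le
  simp only [one_mul, zero_mul, sub_zero, neg_zero, abs_neg, abs_exp, abs_one, mul_zero, exp_zero,
    max_self, mul_one] at hbound
  have hdecay : exp (-α * c) ≤ 1 := exp_le_one_iff.mpr (by nlinarith)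
  have hgrowth : exp c ≤ c := calc
    exp c ≤ max (exp (-2 * c)) (exp c) := le_max_right _ _
    _ ≤ c * exp (-α * c) := hbound
    _ ≤ c := mul_le_of_le_one_right hc.le hdecay
  linarith [add_one_le_exp c]
end

section
/- (Exponential stability transfer, linear case) Suppose the auxiliary ODE ξ̇_γ = Aξ_γ + Bν_γ, ν̇_γ = −F^{-1}[(γC_g + Ċ_g + C_g A)ξ_γ + (γF + Ḟ + C_g B)ν_γ] is uniformly exponentially stable, i.e., there exist c, α > 0 with ‖(ξ_γ(t), ν_γ(t))‖ ≤ c e^{−α(t−t₀)}‖(ξ_γ(t₀), ν_γ(t₀))‖ for all solutions. Then every solution of the variational DAE ξ̇ = Aξ + Bν, 0 = C_g ξ + Fν satisfies the same exponential bound. -/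
open Filter Topology Matrix

/-! Differentiating the constraint `0 = C_g ξ + F ν` along a DAE solution gives
`F ν̇ = -(Ċ_g ξ + C_g (Aξ + Bν) + Ḟ ν)`; adding `γ` times the (vanishing) constraint and
solving for `ν̇` shows that `(ξ, ν)` solves the auxiliary ODE, whose stability bound then
applies verbatim. -/

theorem HasDerivAt.matrix_mulVec {𝕜 ι κ : Type*} [NontriviallyNormedField 𝕜]
    [Fintype ι] [Fintype κ] {M M' : 𝕜 → Matrix ι κ 𝕜} {x : 𝕜 → κ → 𝕜} {x' : κ → 𝕜} {t : 𝕜}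
    (hM : ∀ i j, HasDerivAt (fun s => M s i j) (M' t i j) t) (hx : HasDerivAt x x' t) :
    HasDerivAt (fun s => M s *ᵥ x s) (M' t *ᵥ x t + M t *ᵥ x') t := by
  refine hasDerivAt_pi.mpr fun i => ?_
  simp only [mulVec, dotProduct, Pi.add_apply, ← Finset.sum_add_distrib]
  exact HasDerivAt.fun_sum fun j _ => (hM i j).mul (hasDerivAt_pi.mp hx j)

theorem neg_inv_mulVec_auxiliary_eq {R m n : Type*} [CommRing R] [Fintype m] [DecidableEq m]
    [Fintype n] {A : Matrix n n R} {B : Matrix n m R} {C C' : Matrix m n R}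
    {F F' : Matrix m m R} {ξ : n → R} {ν ν' : m → R} (γ : R) (hF : IsUnit F)
    (hconstr : C *ᵥ ξ + F *ᵥ ν = 0)
    (hconstr' : C' *ᵥ ξ + C *ᵥ (A *ᵥ ξ + B *ᵥ ν) + (F' *ᵥ ν + F *ᵥ ν') = 0) :
    -(F⁻¹ *ᵥ ((γ • C + C' + C * A) *ᵥ ξ + (γ • F + F' + C * B) *ᵥ ν)) = ν' := by
  have hFν' : (γ • C + C' + C * A) *ᵥ ξ + (γ • F + F' + C * B) *ᵥ ν = -(F *ᵥ ν') := by
    have expand : (γ • C + C' + C * A) *ᵥ ξ + (γ • F + F' + C * B) *ᵥ ν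
        = γ • (C *ᵥ ξ + F *ᵥ ν) + (C' *ᵥ ξ + C *ᵥ (A *ᵥ ξ + B *ᵥ ν) + (F' *ᵥ ν + F *ᵥ ν'))
          - F *ᵥ ν' := by
      simp only [add_mulVec, smul_mulVec, ← mulVec_mulVec, mulVec_add, smul_add]
      abel
    rw [expand, hconstr, hconstr', smul_zero, zero_add, zero_sub]
  rw [hFν', mulVec_neg, neg_neg, mulVec_mulVec,
    nonsing_inv_mul _ ((isUnit_iff_isUnit_det F).mp hF), one_mulVec]

theorem hasDerivAt_auxiliary_of_dae {m n : Type*} [Fintype m] [DecidableEq m] [Fintype n]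
    {A : ℝ → Matrix n n ℝ} {B : ℝ → Matrix n m ℝ} {C C' : ℝ → Matrix m n ℝ}
    {F F' : ℝ → Matrix m m ℝ} {ξ : ℝ → n → ℝ} {ν : ℝ → m → ℝ} (γ : ℝ)
    (hC : ∀ i j t, HasDerivAt (fun s => C s i j) (C' t i j) t)
    (hF : ∀ i j t, HasDerivAt (fun s => F s i j) (F' t i j) t) (hFinv : ∀ t, IsUnit (F t))
    (hξ : ∀ t, HasDerivAt ξ (A t *ᵥ ξ t + B t *ᵥ ν t) t)
    (hconstr : ∀ t, C t *ᵥ ξ t + F t *ᵥ ν t = 0) (hν : Differentiable ℝ ν) (t : ℝ) :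
    HasDerivAt ν (-((F t)⁻¹ *ᵥ ((γ • C t + C' t + C t * A t) *ᵥ ξ t
      + (γ • F t + F' t + C t * B t) *ᵥ ν t))) t := by
  have hconstr_deriv := (HasDerivAt.matrix_mulVec (fun i j => hC i j t) (hξ t)).fun_add
    (HasDerivAt.matrix_mulVec (fun i j => hF i j t) (hν t).hasDerivAt)
  rw [show (fun s => C s *ᵥ ξ s + F s *ᵥ ν s) = fun _ => 0 from funext hconstr] at hconstr_deriv
  rw [neg_inv_mulVec_auxiliary_eq γ (hFinv t) (hconstr t)
    (hconstr_deriv.unique (hasDerivAt_const t 0))]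
  exact (hν t).hasDerivAt

theorem exp_stability_transfer_general (n m : ℕ) (t₀ γ : ℝ)
    (A : ℝ → Matrix (Fin n) (Fin n) ℝ)
    (B : ℝ → Matrix (Fin n) (Fin m) ℝ)
    (Cg Cg' : ℝ → Matrix (Fin m) (Fin n) ℝ)
    (F F' : ℝ → Matrix (Fin m) (Fin m) ℝ)
    (hCg : ∀ (i : Fin m) (j : Fin n) (t : ℝ),
      HasDerivAt (fun s => Cg s i j) (Cg' t i j) t)
    (hF : ∀ (i j : Fin m) (t : ℝ),
      HasDerivAt (fun s => F s i j) (F' t i j) t)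
    (hFinv : ∀ t, IsUnit (F t))
    (c α : ℝ)
    (hstab : ∀ (ξγ : ℝ → Fin n → ℝ) (νγ : ℝ → Fin m → ℝ),
      (∀ t, HasDerivAt ξγ ((A t) *ᵥ ξγ t + (B t) *ᵥ νγ t) t) →
      (∀ t, HasDerivAt νγ
        (-((F t)⁻¹ *ᵥ ((γ • Cg t + Cg' t + Cg t * A t) *ᵥ ξγ t
          + (γ • F t + F' t + Cg t * B t) *ᵥ νγ t))) t) →
      ∀ t, t₀ ≤ t →
        ‖(ξγ t, νγ t)‖ ≤ c * Real.exp (-α * (t - t₀)) * ‖(ξγ t₀, νγ t₀)‖) :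
    ∀ (ξ : ℝ → Fin n → ℝ) (ν : ℝ → Fin m → ℝ),
      (∀ t, HasDerivAt ξ ((A t) *ᵥ ξ t + (B t) *ᵥ ν t) t) →
      (∀ t, (0 : Fin m → ℝ) = Cg t *ᵥ ξ t + F t *ᵥ ν t) →
      Differentiable ℝ ν →
      ∀ t, t₀ ≤ t →
        ‖(ξ t, ν t)‖ ≤ c * Real.exp (-α * (t - t₀)) * ‖(ξ t₀, ν t₀)‖ := fun ξ ν hξ hconstr hν =>
  hstab ξ ν hξ
    (hasDerivAt_auxiliary_of_dae γ hCg hF hFinv hξ (fun t => (hconstr t).symm) hν)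

/-- (Exponential stability transfer, linear case.) If the auxiliary ODE of the
variational DAE `ξ̇ = Aξ + Bν, 0 = C_g ξ + F ν` is uniformly exponentially
stable, then every (C¹) solution of the variational DAE satisfies the same
exponential bound. -/
theorem exp_stability_transfer (n m : ℕ) (t₀ γ : ℝ) (hγ : 0 ≤ γ)
    (A : ℝ → Matrix (Fin n) (Fin n) ℝ)
    (B : ℝ → Matrix (Fin n) (Fin m) ℝ)
    (Cg Cg' : ℝ → Matrix (Fin m) (Fin n) ℝ)
    (F F' : ℝ → Matrix (Fin m) (Fin m) ℝ)
    (hA : Continuous A) (hB : Continuous B)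
    (hCg : ∀ (i : Fin m) (j : Fin n) (t : ℝ),
      HasDerivAt (fun s => Cg s i j) (Cg' t i j) t)
    (hF : ∀ (i j : Fin m) (t : ℝ),
      HasDerivAt (fun s => F s i j) (F' t i j) t)
    (hFinv : ∀ t, IsUnit (F t))
    (c α : ℝ) (hc : 0 < c) (hα : 0 < α)
    (hstab : ∀ (ξγ : ℝ → Fin n → ℝ) (νγ : ℝ → Fin m → ℝ),
      (∀ t, HasDerivAt ξγ ((A t) *ᵥ ξγ t + (B t) *ᵥ νγ t) t) →
      (∀ t, HasDerivAt νγ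
        (-((F t)⁻¹ *ᵥ ((γ • Cg t + Cg' t + Cg t * A t) *ᵥ ξγ t
          + (γ • F t + F' t + Cg t * B t) *ᵥ νγ t))) t) →
      ∀ t, t₀ ≤ t →
        ‖(ξγ t, νγ t)‖ ≤ c * Real.exp (-α * (t - t₀)) * ‖(ξγ t₀, νγ t₀)‖) :
    ∀ (ξ : ℝ → Fin n → ℝ) (ν : ℝ → Fin m → ℝ),
      (∀ t, HasDerivAt ξ ((A t) *ᵥ ξ t + (B t) *ᵥ ν t) t) →
      (∀ t, (0 : Fin m → ℝ) = Cg t *ᵥ ξ t + F t *ᵥ ν t) →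
      Differentiable ℝ ν →
      ∀ t, t₀ ≤ t →
        ‖(ξ t, ν t)‖ ≤ c * Real.exp (-α * (t - t₀)) * ‖(ξ t₀, ν t₀)‖ :=
  exp_stability_transfer_general n m t₀ γ A B Cg Cg' F F' hCg hF hFinv c α hstab
end
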